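/- Let λ = (λ₁ ≥ ⋯ ≥ λ_r > 0) be a partition of length r ≥ 1 with flagging f = (f₁ ≤ ⋯ ≤ f_r), and assume f₁ = 1. Set λ' = (λ₂, …, λ_r) and f' = (f₂, …, f_r). Then G̃_{λ,f} = x₁^{λ₁} · ( G̃_{λ',f'} |_{x₁=0} ), where f|_{x₁=0} denotes the result of substituting x₁ = 0 in f ∈ R. -/

import Mathlib

/- Common setup: `R = ℤ[β][[x₀,x₁,x₂,…]]` with `β = Polynomial.X`; only the
variables `x i` for `i ≥ 1` are used in the statements. -/

attribute [local instance] Classical.propDecidable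

noncomputable section

abbrev A : Type := Polynomial ℤ
abbrev R : Type := MvPowerSeries ℕ A

/-- the element β -/
def bR : R := MvPowerSeries.C (σ := ℕ) (R := A) Polynomial.X

/-- the variable `x i` -/
def Xv (i : ℕ) : R := MvPowerSeries.X i

/-- total degree of a monomial -/
def degSum (d : ℕ →₀ ℕ) : ℕ := d.sum fun _ n => n

/-- the ring automorphism `s i` exchanging `x i` and `x (i+1)` -/
def sOp (i : ℕ) (f : R) : R := fun d => f (Finsupp.equivMapDomain (Equiv.swap i (i+1)) d)

/-- the divided difference operator `π i`, characterized by
`(x i - x (i+1)) * π i f = (1 + β x (i+1)) f - (1 + β x i) (s i f)`. -/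
def ddiff (i : ℕ) (f : R) : R :=
  Classical.epsilon fun gq : R =>
    (Xv i - Xv (i+1)) * gq = (1 + bR * Xv (i+1)) * f - (1 + bR * Xv i) * sOp i f

/-- complete homogeneous symmetric function of degree `j` in the variables `x_q, …, x_p` -/
def hsym (q p : ℕ) (j : ℤ) : R := fun d =>
  if (∀ k ∈ d.support, q ≤ k ∧ k ≤ p) ∧ (degSum d : ℤ) = j then 1 else 0

/-- `∏_{i=q}^{p} (1 + β x_i)` -/
def prodOneAdd (q p : ℕ) : R := ∏ i ∈ Finset.Icc q p, (1 + bR * Xv i)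

/-- `G_m^{[p/q]} = Σ_{s≥0} (−β)^s (∏_{i=q}^p (1+βx_i)) h_{m+s}(x_q,…,x_p)`,
defined coefficientwise (only the terms with `m + s ≤ deg d` can contribute to the
coefficient at a monomial `d`). -/
def Gsk (p q : ℕ) (m : ℤ) : R := fun d =>
  ∑ s ∈ Finset.range (((degSum d : ℤ) - m).toNat + 1),
    (-Polynomial.X : A) ^ s * MvPowerSeries.coeff (R := A) d (prodOneAdd q p * hsym q p (m + s))

/-- `G_m^{[p]} = G_m^{[p/1]}` -/
def Gk (p : ℕ) (m : ℤ) : R := Gsk p 1 m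

/-- the geometric series `Σ_{s≥0} (−β x_i)^s = 1/(1+βx_i)` -/
def geom (i : ℕ) : R := fun d =>
  if d.support ⊆ {i} then (-Polynomial.X : A) ^ (d i) else 0

/-- substitution of `x₁ = 0` -/
def setX1Zero (f : R) : R := fun d => if d 1 = 0 then f d else 0

/-- generalized binomial coefficient `C(c,s) = c(c−1)⋯(c−s+1)/s!` for `c : ℤ` -/
def intChoose (c : ℤ) (s : ℕ) : ℤ :=
  if 0 ≤ c then (c.toNat.choose s : ℤ) else (-1) ^ s * (((s : ℤ) - 1 - c).toNat.choose s : ℤ)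

/-- `Σ_{s≥0} C(c,s) β^s G_{m+s}^{[p/q]}`, defined coefficientwise. -/
def JT (p q : ℕ) (c m : ℤ) : R := fun d =>
  ∑ s ∈ Finset.range (((degSum d : ℤ) - m).toNat + 1),
    ((intChoose c s : ℤ) : A) * Polynomial.X ^ s * MvPowerSeries.coeff (R := A) d (Gsk p q (m + s))

/-- the Jacobi–Trudi type determinant `G̃_{λ/μ,f/g}` (rows and columns indexed by
`Fin r`, with `i : Fin r` representing the 1-based index `i+1`). -/
def GtildeSkew (r : ℕ) (lam mu f g : Fin r → ℕ) : R :=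
  Matrix.det (Matrix.of fun i j : Fin r =>
    JT (f i) (g j) ((i : ℤ) - (j : ℤ))
      ((lam i : ℤ) - (mu j : ℤ) + (j : ℤ) - (i : ℤ)))

/-- the Jacobi–Trudi type determinant `G̃_{λ,f}` -/
def Gtilde (r : ℕ) (lam f : Fin r → ℕ) : R :=
  GtildeSkew r lam (fun _ => 0) f (fun _ => 1)

/-- flagged skew set-valued tableaux of shape `λ/μ` with flagging `f/g`:
a tableau assigns to the box in row `i` (1-based index `i+1`), column `j`
(with `μᵢ < j ≤ λᵢ`) a nonempty subset of `{gᵢ,…,fᵢ}`, weakly increasing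
along rows and strictly increasing along columns; boxes outside the shape
carry `∅`. -/
def IsFSVT (r : ℕ) (lam mu f g : Fin r → ℕ) (T : Fin r × ℕ → Finset ℕ) : Prop :=
  (∀ (i : Fin r) (j : ℕ), ¬ (mu i < j ∧ j ≤ lam i) → T (i, j) = ∅) ∧
  (∀ (i : Fin r) (j : ℕ), mu i < j → j ≤ lam i → (T (i, j)).Nonempty) ∧
  (∀ (i : Fin r) (j k : ℕ), k ∈ T (i, j) → g i ≤ k ∧ k ≤ f i) ∧
  (∀ (i : Fin r) (j : ℕ), mu i < j → j + 1 ≤ lam i →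
     ∀ a ∈ T (i, j), ∀ b ∈ T (i, j + 1), a ≤ b) ∧
  (∀ (i : Fin r) (h : (i : ℕ) + 1 < r) (j : ℕ),
     mu i < j → j ≤ lam i → mu ⟨(i : ℕ) + 1, h⟩ < j → j ≤ lam ⟨(i : ℕ) + 1, h⟩ →
     ∀ a ∈ T (i, j), ∀ b ∈ T (⟨(i : ℕ) + 1, h⟩, j), a < b)

/-- the total number `|T|` of entries of a tableau -/
def entriesCount (r : ℕ) (lam mu : Fin r → ℕ) (T : Fin r × ℕ → Finset ℕ) : ℕ :=
  ∑ i : Fin r, ∑ j ∈ Finset.Ioc (mu i) (lam i), (T (i, j)).card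

/-- `|λ/μ|` -/
def shapeSize (r : ℕ) (lam mu : Fin r → ℕ) : ℕ := ∑ i : Fin r, (lam i - mu i)

/-- the weight `β^{|T|−|λ/μ|} ∏_{k∈T} x_k` of a tableau -/
def wt (r : ℕ) (lam mu : Fin r → ℕ) (T : Fin r × ℕ → Finset ℕ) : R :=
  bR ^ (entriesCount r lam mu T - shapeSize r lam mu) *
    ∏ i : Fin r, ∏ j ∈ Finset.Ioc (mu i) (lam i), ∏ k ∈ T (i, j), Xv k

/-- the flagged skew Grothendieck polynomial `G_{λ/μ,f/g}` as the (finite) sum of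
the weights of all flagged skew set-valued tableaux -/
def GF (r : ℕ) (lam mu f g : Fin r → ℕ) : R :=
  ∑ᶠ (T : Fin r × ℕ → Finset ℕ) (_ : IsFSVT r lam mu f g T), wt r lam mu T

/- permutations: `w ∈ S_n` is encoded as a permutation of `ℕ` fixing `0` and
everything `> n`. -/

/-- `w` belongs to `S_n` -/
def isSn (n : ℕ) (w : Equiv.Perm ℕ) : Prop := ∀ k, k = 0 ∨ n < k → w k = k

/-- Coxeter length = number of inversions -/
def len (n : ℕ) (w : Equiv.Perm ℕ) : ℕ :=
  (((Finset.Icc 1 n) ×ˢ (Finset.Icc 1 n)).filter fun pr : ℕ × ℕ =>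
    pr.1 < pr.2 ∧ w pr.2 < w pr.1).card

/-- the rank function `r_w(p,q) = #{i ≤ p : w(i) ≤ q}` -/
def rankf (w : Equiv.Perm ℕ) (p q : ℕ) : ℕ :=
  ((Finset.Icc 1 p).filter fun i => w i ≤ q).card

/-- the diagram `D(w)` -/
def inD (n : ℕ) (w : Equiv.Perm ℕ) (p q : ℕ) : Prop :=
  1 ≤ p ∧ p ≤ n ∧ 1 ≤ q ∧ q ≤ n ∧ q < w p ∧ p < w.symm q

/-- the essential set `Ess(w)` -/
def inEss (n : ℕ) (w : Equiv.Perm ℕ) (p q : ℕ) : Prop :=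
  inD n w p q ∧ ¬ inD n w (p+1) q ∧ ¬ inD n w p (q+1)

/-- `w ∈ S_n` is vexillary: it avoids the pattern 2143 -/
def Vexillary (n : ℕ) (w : Equiv.Perm ℕ) : Prop :=
  ¬ ∃ a b c d : ℕ, 1 ≤ a ∧ a < b ∧ b < c ∧ c < d ∧ d ≤ n ∧
      w b < w a ∧ w a < w d ∧ w d < w c

/-!
Replace, for every `j` at once, column `j + 1` of the Jacobi–Trudi matrix by itself minus
`x₁ / (1 + β x₁)` times column `j`; this unitriangular change keeps the determinant. Since
`h_j(x₁,…,x_p) = x₁ h_{j-1}(x₁,…,x_p) + h_j(x₂,…,x_p)` and the generalized binomial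
coefficients obey Pascal's rule, every new entry is the old one with the lower flag `1` raised
to `2`, i.e. with `x₁` removed. In the first row (`f₁ = 1`, column index `≥ 1`) these entries
vanish, while the corner entry is `G_{λ₁}^{[1]} = x₁^{λ₁}`. Expanding along the first row leaves
`x₁^{λ₁}` times the determinant for `(λ', f')` with lower flag `2`, which is `G̃_{λ',f'}` at
`x₁ = 0`.
-/

open MvPowerSeries Finset

lemma degSum_eq_degree (d : ℕ →₀ ℕ) : degSum d = d.degree := rfl

lemma degSum_le_of_mem_antidiagonal {d : ℕ →₀ ℕ} {p : (ℕ →₀ ℕ) × (ℕ →₀ ℕ)}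
    (hp : p ∈ antidiagonal d) : degSum p.2 ≤ degSum d := by
  rw [← mem_antidiagonal.1 hp, degSum_eq_degree, degSum_eq_degree, map_add]
  omega

lemma degSum_eq_degSum_sub_single_add_one {d : ℕ →₀ ℕ} {i : ℕ} (hi : d i ≠ 0) :
    degSum d = degSum (d - Finsupp.single i 1) + 1 := by
  conv_lhs => rw [← tsub_add_cancel_of_le (Finsupp.single_le_iff.2 (Nat.one_le_iff_ne_zero.2 hi))]
  rw [degSum_eq_degree, degSum_eq_degree, map_add, Finsupp.degree_single]

lemma coeff_Xv_mul (i : ℕ) (F : R) (d : ℕ →₀ ℕ) :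
    coeff d (Xv i * F) = if d i = 0 then 0 else coeff (d - Finsupp.single i 1) F := by
  rw [Xv, MvPowerSeries.X, coeff_monomial_mul, one_mul]
  by_cases h : d i = 0
  · rw [if_pos h, if_neg (by rw [Finsupp.single_le_iff]; omega)]
  · rw [if_neg h, if_pos (Finsupp.single_le_iff.2 (by omega))]

lemma coeff_bR_mul (F : R) (d : ℕ →₀ ℕ) : coeff d (bR * F) = Polynomial.X * coeff d F :=
  coeff_C_mul _ _ _

lemma isUnit_one_add_bR_mul_Xv (i : ℕ) : IsUnit (1 + bR * Xv i) := by
  rw [isUnit_iff_constantCoeff]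
  simp [bR, Xv]

lemma coeff_setX1Zero (F : R) (d : ℕ →₀ ℕ) :
    coeff d (setX1Zero F) = if d 1 = 0 then coeff d F else 0 := rfl

lemma setX1Zero_eq_self_iff {F : R} : setX1Zero F = F ↔ ∀ d, d 1 ≠ 0 → coeff d F = 0 := by
  refine ⟨fun h d hd => ?_, fun h => ext fun d => ?_⟩
  · rw [← h, coeff_setX1Zero, if_neg hd]
  · rw [coeff_setX1Zero]
    split_ifs with hd
    · rfl
    · exact (h d hd).symm

lemma setX1Zero_mul (F G : R) : setX1Zero (F * G) = setX1Zero F * setX1Zero G := by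
  ext d : 1
  rw [coeff_setX1Zero, coeff_mul, coeff_mul]
  have hterm : ∀ p ∈ antidiagonal d, coeff p.1 (setX1Zero F) * coeff p.2 (setX1Zero G) =
      if d 1 = 0 then coeff p.1 F * coeff p.2 G else 0 := by
    rintro ⟨e, e'⟩ hp
    have : e 1 + e' 1 = d 1 := by rw [← mem_antidiagonal.1 hp]; rfl
    simp only [coeff_setX1Zero]
    split_ifs <;> first | omega | simp
  rw [sum_congr rfl hterm]
  split_ifs <;> simp

def setX1ZeroHom : R →+* R where
  toFun := setX1Zero
  map_one' := setX1Zero_eq_self_iff.2 fun d hd => by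
    rw [coeff_one, if_neg (by rintro rfl; exact hd rfl)]
  map_mul' := setX1Zero_mul
  map_zero' := setX1Zero_eq_self_iff.2 fun _ _ => rfl
  map_add' F G := by
    ext d : 1
    simp only [coeff_setX1Zero, map_add]
    split_ifs <;> simp

lemma setX1ZeroHom_apply (F : R) : setX1ZeroHom F = setX1Zero F := rfl

lemma setX1Zero_Xv_one : setX1Zero (Xv 1) = 0 := by
  ext d : 1
  rw [coeff_setX1Zero, Xv, coeff_X, map_zero]
  split_ifs with h1 h <;> simp_all

lemma setX1Zero_bR : setX1Zero bR = bR :=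
  setX1Zero_eq_self_iff.2 fun d hd => by
    rw [bR, coeff_C, if_neg (by rintro rfl; exact hd rfl)]

lemma setX1Zero_Xv_of_ne {i : ℕ} (hi : i ≠ 1) : setX1Zero (Xv i) = Xv i :=
  setX1Zero_eq_self_iff.2 fun d hd => by
    rw [Xv, coeff_X, if_neg]
    rintro rfl
    exact hd (Finsupp.single_eq_of_ne' hi)

lemma setX1Zero_one_add_bR_mul_Xv_one : setX1Zero (1 + bR * Xv 1) = 1 := by
  rw [← setX1ZeroHom_apply, map_add, map_one, map_mul, setX1ZeroHom_apply (Xv 1),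
    setX1Zero_Xv_one, mul_zero, add_zero]

/-- `∑_{s ≥ 0} w s • a (m + s)`, truncated at each monomial `d` to the terms with
`m + s ≤ deg d`: this loses nothing when `a j` has no monomial of degree `< j`. -/
def shiftSeries (a : ℤ → R) (w : ℕ → A) (m : ℤ) : R := fun d =>
  ∑ s ∈ range (((degSum d : ℤ) - m).toNat + 1), w s * coeff d (a (m + s))

def OrderGeIndex (a : ℤ → R) : Prop :=
  ∀ (j : ℤ) (d : ℕ →₀ ℕ), (degSum d : ℤ) < j → coeff d (a j) = 0

lemma coeff_shiftSeries (a : ℤ → R) (w : ℕ → A) (m : ℤ) (d : ℕ →₀ ℕ) :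
    coeff d (shiftSeries a w m) =
      ∑ s ∈ range (((degSum d : ℤ) - m).toNat + 1), w s * coeff d (a (m + s)) := rfl

lemma shiftSeries_add (a b : ℤ → R) (w : ℕ → A) (m : ℤ) :
    shiftSeries (fun j => a j + b j) w m = shiftSeries a w m + shiftSeries b w m := by
  ext d : 1
  simp only [coeff_shiftSeries, map_add, mul_add, sum_add_distrib]

lemma shiftSeries_eq_zero {a : ℤ → R} {m : ℤ} (h : ∀ s : ℕ, a (m + s) = 0) (w : ℕ → A) :
    shiftSeries a w m = 0 := by
  ext d : 1
  simp [coeff_shiftSeries, h]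

lemma setX1Zero_shiftSeries {a : ℤ → R} (h : ∀ j, setX1Zero (a j) = a j) (w : ℕ → A)
    (m : ℤ) : setX1Zero (shiftSeries a w m) = shiftSeries a w m :=
  setX1Zero_eq_self_iff.2 fun d hd => (coeff_shiftSeries ..).trans <| sum_eq_zero fun s _ => by
    rw [setX1Zero_eq_self_iff.1 (h _) d hd, mul_zero]

namespace OrderGeIndex

variable {a c : ℤ → R}

lemma coeff_shiftSeries_eq_sum (ha : OrderGeIndex a) (w : ℕ → A) (m : ℤ) {d : ℕ →₀ ℕ} {N : ℕ}
    (hN : ((degSum d : ℤ) - m).toNat + 1 ≤ N) :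
    coeff d (shiftSeries a w m) = ∑ s ∈ range N, w s * coeff d (a (m + s)) := by
  refine sum_subset (range_subset_range.2 hN) fun s _ hs => ?_
  rw [mem_range, not_lt] at hs
  rw [ha _ _ (by omega), mul_zero]

protected lemma shiftSeries (ha : OrderGeIndex a) (w : ℕ → A) :
    OrderGeIndex (shiftSeries a w) :=
  fun _ _ hd => (coeff_shiftSeries ..).trans <| sum_eq_zero fun _ _ => by
    rw [ha _ _ (by omega), mul_zero]

lemma mul_left (ha : OrderGeIndex a) (F : R) : OrderGeIndex fun j => F * a j :=
  fun _ d hd => by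
    rw [coeff_mul]
    refine sum_eq_zero fun p hp => ?_
    rw [ha _ _ (by have := degSum_le_of_mem_antidiagonal hp; omega), mul_zero]

lemma Xv_mul_comp_sub_one (ha : OrderGeIndex a) (i : ℕ) :
    OrderGeIndex fun j => Xv i * a (j - 1) := fun j d hd => by
  rw [coeff_Xv_mul]
  split_ifs with hi
  · rfl
  · have hdeg := degSum_eq_degSum_sub_single_add_one hi
    exact ha _ _ (by omega)

lemma shiftSeries_mul_left (ha : OrderGeIndex a) (F : R) (w : ℕ → A) (m : ℤ) :
    shiftSeries (fun j => F * a j) w m = F * shiftSeries a w m := by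
  ext d : 1
  rw [coeff_shiftSeries, coeff_mul]
  have hp : ∀ p ∈ antidiagonal d, coeff p.1 F * coeff p.2 (shiftSeries a w m) =
      ∑ s ∈ range (((degSum d : ℤ) - m).toNat + 1),
        w s * (coeff p.1 F * coeff p.2 (a (m + s))) := fun p hp => by
    rw [ha.coeff_shiftSeries_eq_sum w m (N := ((degSum d : ℤ) - m).toNat + 1)
      (by have := degSum_le_of_mem_antidiagonal hp; omega), mul_sum]
    exact sum_congr rfl fun _ _ => by ring
  rw [sum_congr rfl hp, sum_comm]
  simp only [coeff_mul, mul_sum]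

lemma shiftSeries_eq_shiftSeries_sub_one (hc : OrderGeIndex c) (w : ℕ → A) (m : ℤ) :
    shiftSeries c w m = shiftSeries (fun j => c (j + 1)) w (m - 1) := by
  ext d : 1
  rw [hc.coeff_shiftSeries_eq_sum w m (N := ((degSum d : ℤ) - (m - 1)).toNat + 1) (by omega),
    coeff_shiftSeries]
  exact sum_congr rfl fun s _ => by congr 3; ring

end OrderGeIndex

lemma shiftSeries_Xv_mul_add {a b : ℤ → R} (ha : OrderGeIndex a) (hb : OrderGeIndex b)
    (i : ℕ) (F : R) (w : ℕ → A) (m : ℤ) :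
    shiftSeries (fun j => Xv i * a (j - 1) + F * b j) w m =
      Xv i * shiftSeries a w (m - 1) + F * shiftSeries b w m := by
  rw [shiftSeries_add, (ha.Xv_mul_comp_sub_one i).shiftSeries_eq_shiftSeries_sub_one,
    ← ha.shiftSeries_mul_left, hb.shiftSeries_mul_left]
  simp only [add_sub_cancel_right]

lemma intChoose_eq_choose (c : ℤ) (s : ℕ) : intChoose c s = Ring.choose c s := by
  unfold intChoose
  split_ifs with hc
  · lift c to ℕ using hc
    rw [Int.toNat_natCast, Ring.choose_natCast]
  · obtain ⟨r, rfl⟩ : ∃ r : ℕ, c = -((r + 1 : ℕ) : ℤ) := ⟨(-c - 1).toNat, by omega⟩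
    have hnat : ((r + 1 : ℕ) : ℤ) + s - 1 = ((s + r : ℕ) : ℤ) := by push_cast; ring
    rw [Ring.choose_neg, hnat, Ring.choose_natCast, Units.smul_def, Int.coe_negOnePow_natCast,
      smul_eq_mul, show ((s : ℤ) - 1 - -((r + 1 : ℕ) : ℤ)).toNat = s + r by omega]

lemma shiftSeries_intChoose_zero (a : ℤ → R) (m : ℤ) :
    shiftSeries a (fun s => ((intChoose 0 s : ℤ) : A) * Polynomial.X ^ s) m = a m := by
  ext d : 1
  rw [coeff_shiftSeries, sum_range_succ', sum_eq_zero fun s _ => by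
    rw [intChoose_eq_choose, Nat.cast_succ, Ring.choose_zero_succ]; simp]
  simp [intChoose_eq_choose]

namespace OrderGeIndex

variable {a : ℤ → R}

lemma shiftSeries_add_bR_mul_shiftSeries_add_one (ha : OrderGeIndex a) (m : ℤ) :
    shiftSeries a (fun s => (-Polynomial.X) ^ s) m +
      bR * shiftSeries a (fun s => (-Polynomial.X) ^ s) (m + 1) = a m := by
  ext d : 1
  set K := ((degSum d : ℤ) - m).toNat with hK
  rw [map_add, coeff_bR_mul, ha.coeff_shiftSeries_eq_sum _ _ (N := K + 1) le_rfl,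
    ha.coeff_shiftSeries_eq_sum _ _ (N := K + 1) (by omega), sum_range_succ',
    sum_range_succ _ K, ha (m + 1 + K) d (by omega), mul_zero, add_zero, mul_sum]
  have htel : ∑ s ∈ range K, (-Polynomial.X) ^ (s + 1) * coeff d (a (m + (s + 1 : ℕ))) =
      -∑ s ∈ range K, Polynomial.X * ((-Polynomial.X) ^ s * coeff d (a (m + 1 + s))) := by
    rw [← sum_neg_distrib]
    refine sum_congr rfl fun s _ => ?_
    rw [show m + ((s + 1 : ℕ) : ℤ) = m + 1 + s by push_cast; ring]
    ring
  rw [htel]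
  simp

lemma shiftSeries_intChoose_succ (ha : OrderGeIndex a) (c m : ℤ) :
    shiftSeries a (fun s => ((intChoose (c + 1) s : ℤ) : A) * Polynomial.X ^ s) (m - 1) =
      shiftSeries a (fun s => ((intChoose c s : ℤ) : A) * Polynomial.X ^ s) (m - 1) +
        bR * shiftSeries a (fun s => ((intChoose c s : ℤ) : A) * Polynomial.X ^ s) m := by
  ext d : 1
  set K := ((degSum d : ℤ) - m + 1).toNat with hK
  rw [map_add, coeff_bR_mul, ha.coeff_shiftSeries_eq_sum _ _ (N := K + 1) (by omega),
    ha.coeff_shiftSeries_eq_sum _ _ (N := K + 1) (by omega),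
    ha.coeff_shiftSeries_eq_sum _ m (N := K + 1) (by omega), sum_range_succ', sum_range_succ' _ K,
    sum_range_succ _ K, ha (m + K) d (by omega), mul_zero, add_zero, mul_sum, add_right_comm,
    ← sum_add_distrib]
  congr 1
  · refine sum_congr rfl fun s _ => ?_
    rw [show m - 1 + ((s + 1 : ℕ) : ℤ) = m + s by push_cast; ring, intChoose_eq_choose,
      intChoose_eq_choose, intChoose_eq_choose, Ring.choose_succ_succ]
    push_cast
    ring
  · simp [intChoose_eq_choose]

end OrderGeIndex

lemma coeff_hsym (q p : ℕ) (j : ℤ) (d : ℕ →₀ ℕ) :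
    coeff d (hsym q p j) =
      if (∀ k ∈ d.support, q ≤ k ∧ k ≤ p) ∧ (degSum d : ℤ) = j then 1 else 0 := rfl

lemma orderGeIndex_hsym (q p : ℕ) : OrderGeIndex (hsym q p) := fun _ _ hd => by
  rw [coeff_hsym, if_neg fun h => hd.ne h.2]

lemma hsym_zero (q p : ℕ) : hsym q p 0 = 1 := by
  ext d : 1
  rw [coeff_hsym, coeff_one]
  by_cases hd : d = 0
  · simp [hd, degSum_eq_degree]
  · rw [if_neg hd, if_neg fun h => hd ((Finsupp.degree_eq_zero_iff d).1 (by exact_mod_cast h.2))]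

lemma hsym_eq_zero_of_lt {q p : ℕ} (hpq : p < q) {j : ℤ} (hj : j ≠ 0) : hsym q p j = 0 := by
  ext d : 1
  rw [coeff_hsym, map_zero, if_neg]
  rintro ⟨hsupp, hdeg⟩
  have hd : d = 0 := Finsupp.support_eq_empty.1 <| eq_empty_of_forall_notMem fun k hk => by
    have := hsupp k hk
    omega
  simp [hd, degSum_eq_degree] at hdeg
  exact hj hdeg.symm

lemma setX1Zero_hsym {q : ℕ} (hq : 1 < q) (p : ℕ) (j : ℤ) : setX1Zero (hsym q p j) = hsym q p j :=
  setX1Zero_eq_self_iff.2 fun d hd => by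
    rw [coeff_hsym, if_neg fun h => absurd (h.1 1 (Finsupp.mem_support_iff.2 hd)).1 (by omega)]

lemma hsym_one_eq {p : ℕ} (hp : 1 ≤ p) (j : ℤ) :
    hsym 1 p j = Xv 1 * hsym 1 p (j - 1) + hsym 2 p j := by
  ext d : 1
  rw [map_add, coeff_Xv_mul, coeff_hsym, coeff_hsym, coeff_hsym]
  simp only [Finsupp.mem_support_iff]
  by_cases h1 : d 1 = 0
  · have hsupp : (∀ k, d k ≠ 0 → 1 ≤ k ∧ k ≤ p) ↔ (∀ k, d k ≠ 0 → 2 ≤ k ∧ k ≤ p) := by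
      refine ⟨fun h k hk => ?_, fun h k hk => ?_⟩
      · have := h k hk
        have : k ≠ 1 := by rintro rfl; exact hk h1
        omega
      · have := h k hk
        omega
    simp only [if_pos h1, hsupp, zero_add]
  · have hsupp : (∀ k, d k ≠ 0 → 1 ≤ k ∧ k ≤ p) ↔
        (∀ k, (d - Finsupp.single 1 1 : ℕ →₀ ℕ) k ≠ 0 → 1 ≤ k ∧ k ≤ p) := by
      refine forall_congr' fun k => ?_
      rcases eq_or_ne k 1 with rfl | hk
      · simp [hp]
      · rw [Finsupp.tsub_apply, Finsupp.single_eq_of_ne' hk.symm, Nat.sub_zero]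
    have hdeg := degSum_eq_degSum_sub_single_add_one h1
    have h2 : ¬((∀ k, d k ≠ 0 → 2 ≤ k ∧ k ≤ p) ∧ (degSum d : ℤ) = j) :=
      fun h => absurd (h.1 1 h1).1 (by omega)
    rw [if_neg h1, if_neg h2, add_zero, hsupp]
    congr 2
    apply propext
    omega

lemma prodOneAdd_one {p : ℕ} (hp : 1 ≤ p) :
    prodOneAdd 1 p = (1 + bR * Xv 1) * prodOneAdd 2 p := by
  rw [prodOneAdd, prodOneAdd, ← insert_Icc_add_one_left_eq_Icc hp, prod_insert (by simp)]
  rfl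

lemma setX1Zero_prodOneAdd {q : ℕ} (hq : 1 < q) (p : ℕ) :
    setX1Zero (prodOneAdd q p) = prodOneAdd q p := by
  rw [← setX1ZeroHom_apply, prodOneAdd, map_prod]
  refine prod_congr rfl fun i hi => ?_
  rw [map_add, map_one, map_mul, setX1ZeroHom_apply, setX1ZeroHom_apply, setX1Zero_bR,
    setX1Zero_Xv_of_ne (by rw [mem_Icc] at hi; omega)]

lemma Gsk_eq_shiftSeries (p q : ℕ) (m : ℤ) :
    Gsk p q m =
      shiftSeries (fun j => prodOneAdd q p * hsym q p j) (fun s => (-Polynomial.X) ^ s) m :=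
  rfl

lemma orderGeIndex_Gsk (p q : ℕ) : OrderGeIndex (Gsk p q) :=
  ((orderGeIndex_hsym q p).mul_left _).shiftSeries _

lemma Gsk_one_eq {p : ℕ} (hp : 1 ≤ p) (m : ℤ) :
    Gsk p 1 m = Xv 1 * Gsk p 1 (m - 1) + (1 + bR * Xv 1) * Gsk p 2 m := by
  have hfamily : (fun j => prodOneAdd 1 p * hsym 1 p j) = fun j =>
      Xv 1 * (prodOneAdd 1 p * hsym 1 p (j - 1)) +
        (1 + bR * Xv 1) * (prodOneAdd 2 p * hsym 2 p j) :=
    funext fun j => by rw [hsym_one_eq hp, prodOneAdd_one hp]; ring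
  rw [Gsk_eq_shiftSeries, hfamily, shiftSeries_Xv_mul_add ((orderGeIndex_hsym 1 p).mul_left _)
    ((orderGeIndex_hsym 2 p).mul_left _)]
  rfl

lemma Gsk_add_bR_mul_Gsk_add_one (p q : ℕ) (m : ℤ) :
    Gsk p q m + bR * Gsk p q (m + 1) = prodOneAdd q p * hsym q p m := by
  rw [Gsk_eq_shiftSeries, Gsk_eq_shiftSeries]
  exact ((orderGeIndex_hsym q p).mul_left _).shiftSeries_add_bR_mul_shiftSeries_add_one m

lemma Gsk_of_lt {p q : ℕ} (hpq : p < q) {m : ℤ} (hm : 0 < m) : Gsk p q m = 0 := by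
  rw [Gsk_eq_shiftSeries]
  exact shiftSeries_eq_zero (fun _ => by rw [hsym_eq_zero_of_lt hpq (by omega), mul_zero]) _

lemma setX1Zero_Gsk {q : ℕ} (hq : 1 < q) (p : ℕ) (m : ℤ) :
    setX1Zero (Gsk p q m) = Gsk p q m := by
  rw [Gsk_eq_shiftSeries]
  exact setX1Zero_shiftSeries (fun _ => by
    rw [setX1Zero_mul, setX1Zero_prodOneAdd hq, setX1Zero_hsym hq]) _ _

lemma Gsk_one_one (M : ℕ) : Gsk 1 1 M = Xv 1 ^ M := by
  have hrec : ∀ m : ℤ, 0 < m → Gsk 1 1 m = Xv 1 * Gsk 1 1 (m - 1) := fun m hm => by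
    rw [Gsk_one_eq le_rfl, Gsk_of_lt one_lt_two hm, mul_zero, add_zero]
  induction M with
  | zero =>
    have h := Gsk_add_bR_mul_Gsk_add_one 1 1 0
    rw [zero_add, hrec 1 one_pos, sub_self, hsym_zero, prodOneAdd, Icc_self, prod_singleton]
      at h
    refine (isUnit_one_add_bR_mul_Xv 1).mul_left_cancel ?_
    linear_combination h
  | succ M ih =>
    rw [Nat.cast_succ, hrec _ (by positivity), add_sub_cancel_right, ih, pow_succ, mul_comm]

lemma JT_eq_shiftSeries (p q : ℕ) (c m : ℤ) :
    JT p q c m = shiftSeries (Gsk p q) (fun s => ((intChoose c s : ℤ) : A) * Polynomial.X ^ s) m :=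
  rfl

lemma JT_zero (p q : ℕ) (m : ℤ) : JT p q 0 m = Gsk p q m := by
  rw [JT_eq_shiftSeries]
  exact shiftSeries_intChoose_zero _ _

lemma JT_of_lt {p q : ℕ} (hpq : p < q) (c : ℤ) {m : ℤ} (hm : 0 < m) : JT p q c m = 0 := by
  rw [JT_eq_shiftSeries]
  exact shiftSeries_eq_zero (fun _ => Gsk_of_lt hpq (by omega)) _

lemma JT_add_one_sub_one (p q : ℕ) (c m : ℤ) :
    JT p q (c + 1) (m - 1) = JT p q c (m - 1) + bR * JT p q c m := by
  simp only [JT_eq_shiftSeries]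
  exact (orderGeIndex_Gsk p q).shiftSeries_intChoose_succ c m

lemma JT_one_eq_Xv_mul_add {p : ℕ} (hp : 1 ≤ p) (c m : ℤ) :
    JT p 1 c m = Xv 1 * JT p 1 c (m - 1) + (1 + bR * Xv 1) * JT p 2 c m := by
  have hfamily : (fun j => Xv 1 * Gsk p 1 (j - 1) + (1 + bR * Xv 1) * Gsk p 2 j) = Gsk p 1 :=
    funext fun j => (Gsk_one_eq hp j).symm
  have h := shiftSeries_Xv_mul_add (orderGeIndex_Gsk p 1) (orderGeIndex_Gsk p 2) 1
    (1 + bR * Xv 1) (fun s => ((intChoose c s : ℤ) : A) * Polynomial.X ^ s) m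
  rw [hfamily] at h
  simpa only [JT_eq_shiftSeries] using h

lemma setX1Zero_JT {p : ℕ} (hp : 1 ≤ p) (c m : ℤ) : setX1Zero (JT p 1 c m) = JT p 2 c m := by
  rw [← setX1ZeroHom_apply, JT_one_eq_Xv_mul_add hp, map_add, map_mul, map_mul,
    setX1ZeroHom_apply (Xv 1), setX1Zero_Xv_one, zero_mul, zero_add, setX1ZeroHom_apply,
    setX1Zero_one_add_bR_mul_Xv_one, one_mul, setX1ZeroHom_apply, JT_eq_shiftSeries]
  exact setX1Zero_shiftSeries (fun _ => setX1Zero_Gsk one_lt_two _ _) _ _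

lemma JT_one_eq {p : ℕ} (hp : 1 ≤ p) (c m : ℤ) :
    JT p 1 c m = Xv 1 * Ring.inverse (1 + bR * Xv 1) * JT p 1 (c + 1) (m - 1) + JT p 2 c m := by
  have hu := isUnit_one_add_bR_mul_Xv 1
  refine hu.mul_left_cancel ?_
  rw [JT_add_one_sub_one]
  linear_combination JT_one_eq_Xv_mul_add hp c m -
    Xv 1 * (JT p 1 c (m - 1) + bR * JT p 1 c m) * Ring.mul_inverse_cancel _ hu

lemma det_succ_eq_mul_det_submatrix_of_row_zero {S : Type*} [CommRing S] {n : ℕ}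
    (B : Matrix (Fin (n + 1)) (Fin (n + 1)) S) (h : ∀ j : Fin n, B 0 j.succ = 0) :
    B.det = B 0 0 * (B.submatrix Fin.succ Fin.succ).det := by
  rw [Matrix.det_succ_row_zero, Fin.sum_univ_succ,
    sum_eq_zero fun j _ => by rw [h j, mul_zero, zero_mul]]
  simp

lemma setX1Zero_Gtilde (n : ℕ) (lam f : Fin n → ℕ) (hf : ∀ i, 0 < f i) :
    setX1Zero (Gtilde n lam f) = GtildeSkew n lam (fun _ => 0) f (fun _ => 2) := by
  rw [Gtilde, GtildeSkew, GtildeSkew, ← setX1ZeroHom_apply, RingHom.map_det]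
  congr 1
  ext i j : 1
  exact setX1Zero_JT (hf i) _ _

lemma Gtilde_succ_eq_GtildeSkew (n : ℕ) (lam f : Fin (n + 1) → ℕ) (hf : ∀ i, 0 < f i) :
    Gtilde (n + 1) lam f = GtildeSkew (n + 1) lam (fun _ => 0) f (Fin.cons 1 fun _ => 2) := by
  refine Matrix.det_eq_of_forall_col_eq_smul_add_pred
    (fun _ => Xv 1 * Ring.inverse (1 + bR * Xv 1))
    (fun _ => by simp only [Matrix.of_apply, Fin.cons_zero]) fun i j => ?_
  simp only [Matrix.of_apply, Fin.cons_succ]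
  rw [JT_one_eq (hf i), add_comm]
  congr 3 <;> simp only [Fin.val_succ, Fin.val_castSucc] <;> push_cast <;> ring

theorem stmt7_general (r : ℕ) (hr : 0 < r) (lam f : Fin r → ℕ)
    (hf_pos : ∀ i, 0 < f i)
    (hf1 : f ⟨0, hr⟩ = 1) :
    Gtilde r lam f =
      Xv 1 ^ (lam ⟨0, hr⟩) *
        setX1Zero (Gtilde (r - 1)
          (fun i => lam ⟨(i : ℕ) + 1, Nat.add_lt_of_lt_sub i.isLt⟩)
          (fun i => f ⟨(i : ℕ) + 1, Nat.add_lt_of_lt_sub i.isLt⟩)) := by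
  obtain ⟨n, rfl⟩ : ∃ n, r = n + 1 := ⟨r - 1, by omega⟩
  have hf0 : f 0 = 1 := hf1
  rw [Gtilde_succ_eq_GtildeSkew n lam f hf_pos, GtildeSkew,
    det_succ_eq_mul_det_submatrix_of_row_zero _ fun j =>
      JT_of_lt (by simp [hf0]) _ (by simp; omega)]
  congr 1
  · simp [hf0, JT_zero, ← Gsk_one_one]
  · rw [setX1Zero_Gtilde _ _ _ fun _ => hf_pos _, GtildeSkew]
    refine congrArg Matrix.det (Matrix.ext fun i j => ?_)
    simp only [Matrix.submatrix_apply, Matrix.of_apply, Fin.cons_succ]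
    congr 1 <;> simp only [Fin.val_succ] <;> push_cast
    · ring
    · rw [← add_assoc, add_sub_add_right_eq_sub]
      rfl

theorem stmt7 (r : ℕ) (hr : 0 < r) (lam f : Fin r → ℕ)
    (hlam_anti : ∀ i j : Fin r, i ≤ j → lam j ≤ lam i) (hlam_pos : ∀ i, 0 < lam i)
    (hf_mono : ∀ i j : Fin r, i ≤ j → f i ≤ f j) (hf_pos : ∀ i, 0 < f i)
    (hf1 : f ⟨0, hr⟩ = 1) :
    Gtilde r lam f =
      Xv 1 ^ (lam ⟨0, hr⟩) *
        setX1Zero (Gtilde (r - 1)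
          (fun i => lam ⟨(i : ℕ) + 1, Nat.add_lt_of_lt_sub i.isLt⟩)
          (fun i => f ⟨(i : ℕ) + 1, Nat.add_lt_of_lt_sub i.isLt⟩)) :=
  stmt7_general r hr lam f hf_pos hf1

end
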